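/- arXiv:2207.03836 — 2 statements merged into one kernel-verified Lean document; each statement's English description precedes it below -/
import Mathlib

section
/- Let {a_j}_{j≥1} be a non-increasing sequence of positive reals with ∑_{j=1}^∞ a_j = ∞, and define c_j = min{1/j, max{a_j, 1/j²}}. Then ∑_{j=1}^∞ c_j = ∞. -/
/-!
Since `max (a j) (1 / j²) ≥ a j`, it suffices that `b j = min (1 / j) (a j)` has divergent sum.
The sequence `b` is again non-increasing, so Cauchy condensation applies: its condensed terms are
`2ᵏ b (2ᵏ) = min 1 (2ᵏ a (2ᵏ))`, and truncating the terms at `1` does not affect summability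
because the terms of a convergent series tend to `0`.
-/

open Filter

theorem summable_min_const_iff {ι : Type*} {c : ℝ} (hc : 0 < c) (f : ι → ℝ) :
    Summable (fun i => min c (f i)) ↔ Summable f := by
  constructor
  · intro h
    refine h.congr_cofinite ?_
    filter_upwards [h.tendsto_cofinite_zero.eventually (eventually_lt_nhds hc)] with i hi
    exact min_eq_right ((min_lt_iff.mp hi).resolve_left (lt_irrefl c)).le
  · intro h
    refine h.congr_cofinite ?_
    filter_upwards [h.tendsto_cofinite_zero.eventually (eventually_lt_nhds hc)] with i hi
    exact (min_eq_right hi.le).symm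

theorem summable_condensed_iff_of_antitoneOn {f : ℕ → ℝ} (hf : ∀ n, 1 ≤ n → 0 ≤ f n)
    (hmono : AntitoneOn f (Set.Ici 1)) :
    (Summable fun k : ℕ => (2 : ℝ) ^ k * f (2 ^ k)) ↔ Summable fun n => f (n + 1) := by
  -- `f (max n 1)` agrees with `f` off `0` and is nonnegative at `0` as well
  have key := summable_condensed_iff_of_nonneg (f := fun n => f (max n 1))
    (fun n => hf _ (le_max_right n 1))
    (fun m n _ hmn => hmono (le_max_right m 1) (le_max_right n 1) (max_le_max_right 1 hmn))
  simpa only [max_eq_left Nat.one_le_two_pow,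
    ← summable_nat_add_iff 1 (f := fun n => f (max n 1)), le_add_self, max_eq_left] using key

theorem antitoneOn_one_div_natCast : AntitoneOn (fun n : ℕ => 1 / (n : ℝ)) (Set.Ici 1) := by
  intro m hm n _ hmn
  have hm' : (0 : ℝ) < m := by exact_mod_cast hm
  exact one_div_le_one_div_of_le hm' (by exact_mod_cast hmn)

theorem not_summable_min_one_div_of_antitoneOn {a : ℕ → ℝ} (ha : ∀ n, 1 ≤ n → 0 ≤ a n)
    (hmono : AntitoneOn a (Set.Ici 1)) (hdiv : ¬ Summable fun n => a (n + 1)) :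
    ¬ Summable fun n : ℕ => min (1 / ((n : ℝ) + 1)) (a (n + 1)) := by
  set b : ℕ → ℝ := fun n => min (1 / (n : ℝ)) (a n)
  have hb : ∀ n, 1 ≤ n → 0 ≤ b n := fun n hn => le_min (by positivity) (ha n hn)
  have hcondensed : ∀ k : ℕ, (2 : ℝ) ^ k * b (2 ^ k) = min 1 ((2 : ℝ) ^ k * a (2 ^ k)) := by
    intro k
    rw [mul_min_of_nonneg _ _ (by positivity), Nat.cast_pow, Nat.cast_ofNat,
      mul_one_div_cancel (by positivity)]
  have hb_iff :=
    (summable_condensed_iff_of_antitoneOn hb (antitoneOn_one_div_natCast.min hmono)).not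
  simp only [hcondensed, summable_min_const_iff one_pos,
    summable_condensed_iff_of_antitoneOn ha hmono, b, Nat.cast_add_one] at hb_iff
  exact hb_iff.mp hdiv

theorem c_seq_divergent
    (a : ℕ → ℝ) (hpos : ∀ j, 1 ≤ j → 0 < a j)
    (hmono : AntitoneOn a (Set.Ici 1))
    (hdiv : ¬ Summable (fun j : ℕ => a (j + 1))) :
    ¬ Summable (fun j : ℕ =>
      min (1 / ((j : ℝ) + 1)) (max (a (j + 1)) (1 / ((j : ℝ) + 1) ^ 2))) := by
  have hsmaller := not_summable_min_one_div_of_antitoneOn (fun n hn => (hpos n hn).le) hmono hdiv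
  exact fun hsum => hsmaller <| Summable.of_nonneg_of_le
    (fun n => le_min (by positivity) (hpos _ n.succ_pos).le)
    (fun n => min_le_min le_rfl (le_max_left _ _)) hsum
end

section
/- Suppose (X, μ) is a probability space, 0 < δ < 1, C̃ ≥ 1, D, D' > 0, and (B_k) are measurable sets with ∑_{k=1}^∞ μ(B_k) = ∞ such that for all n and N ≥ n, ∑_{i,j=n}^N μ(B_i ∩ B_j) ≤ C̃·[D·∑_{k=n}^N μ(B_k) + D' + (∑_{k=n}^N μ(B_k))²]. Then μ(limsup B_k) ≥ 1/C̃ > 0. -/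
open MeasureTheory Filter Topology Finset
open scoped ENNReal

/-! Cauchy–Schwarz applied to the counting function `∑_{k=n}^N 1_{B_k}`, which is supported on
`⋃_{k=n}^N B_k`, gives the Chung–Erdős inequality
`(∑ μ B_k)² ≤ μ (⋃ B_k) · ∑_{i,j} μ (B_i ∩ B_j)`. With the assumed bound on the double sum this
reads `a_N² ≤ C̃ · μ (⋃_{k ≥ n} B_k) · (D a_N + D' + a_N²)` for the partial sums
`a_N = ∑_{k=n}^N μ B_k`, which tend to infinity; dividing by `a_N²` and letting `N → ∞` gives
`μ (⋃_{k ≥ n} B_k) ≥ 1 / C̃` for every `n`, and continuity from above passes this to the limsup. -/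

theorem tendsto_sum_Icc_toReal_atTop {f : ℕ → ℝ≥0∞} (hf : ∀ k, f k ≠ ∞)
    (h : ∑' k, f k = ∞) (n : ℕ) :
    Tendsto (fun N => ∑ k ∈ Icc n N, (f k).toReal) atTop atTop := by
  have hns : ¬ Summable fun k => (f k).toReal := fun hs => by
    have := ENNReal.ofReal_tsum_of_nonneg (fun k => ENNReal.toReal_nonneg) hs
    simp only [ENNReal.ofReal_toReal (hf _), h] at this
    exact ENNReal.ofReal_ne_top this
  have hrange := (not_summable_iff_tendsto_nat_atTop_of_nonneg
    (fun k => ENNReal.toReal_nonneg)).1 hns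
  refine (tendsto_atTop_add_const_right _ (-∑ k ∈ range n, (f k).toReal)
    (hrange.comp (tendsto_add_atTop_nat 1))).congr' ?_
  filter_upwards [eventually_ge_atTop n] with N hN
  rw [← Finset.Ico_add_one_right_eq_Icc, sum_Ico_eq_sub _ (by omega), Function.comp_apply,
    sub_eq_add_neg]

theorem one_le_of_sq_le_mul_quadratic {ι : Type*} {l : Filter ι} [l.NeBot] {a : ι → ℝ}
    (ha : Tendsto a l atTop) {c D D' : ℝ}
    (h : ∀ᶠ i in l, a i ^ 2 ≤ c * (D * a i + D' + a i ^ 2)) : 1 ≤ c := by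
  have hinv := tendsto_inv_atTop_zero.comp ha
  have hlim : Tendsto (fun i => c * (D * (a i)⁻¹ + D' * (a i)⁻¹ ^ 2 + 1)) l (𝓝 c) := by
    simpa using ((((hinv.const_mul D).add ((hinv.pow 2).const_mul D')).add_const 1).const_mul c)
  refine ge_of_tendsto hlim ?_
  filter_upwards [h, ha.eventually_gt_atTop 0] with i hi hpos
  have hrescale : c * (D * (a i)⁻¹ + D' * (a i)⁻¹ ^ 2 + 1)
      = c * (D * a i + D' + a i ^ 2) / a i ^ 2 := by
    field_simp
  rw [hrescale, le_div_iff₀ (by positivity), one_mul]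
  exact hi

section

variable {X : Type*} [MeasurableSpace X] (μ : Measure X)

theorem sq_lintegral_le_measure_mul_lintegral_sq {f : X → ℝ≥0∞} (hf : AEMeasurable f μ)
    {U : Set X} (hU : MeasurableSet U) (hfU : ∀ x ∉ U, f x = 0) :
    (∫⁻ x, f x ∂μ) ^ 2 ≤ μ U * ∫⁻ x, f x ^ 2 ∂μ := by
  have hf_eq : f * U.indicator 1 = f := by
    ext x
    by_cases hx : x ∈ U <;> simp [hx, hfU]
  have hU_sq : ∫⁻ x, U.indicator 1 x ^ (2 : ℝ) ∂μ = μ U := by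
    rw [← lintegral_indicator_one hU]
    congr with x
    by_cases hx : x ∈ U <;> simp [hx]
  have holder := ENNReal.lintegral_mul_le_Lp_mul_Lq μ .two_two hf
    (g := U.indicator 1) (aemeasurable_one.indicator hU)
  rw [hf_eq, hU_sq] at holder
  calc (∫⁻ x, f x ∂μ) ^ 2
      ≤ ((∫⁻ x, f x ^ (2 : ℝ) ∂μ) ^ (1 / 2 : ℝ) * μ U ^ (1 / 2 : ℝ)) ^ 2 := by gcongr
    _ = μ U * ∫⁻ x, f x ^ 2 ∂μ := by
      rw [mul_pow, ← ENNReal.rpow_natCast, ← ENNReal.rpow_natCast, ← ENNReal.rpow_mul,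
        ← ENNReal.rpow_mul]
      norm_num [mul_comm]

theorem sq_sum_measure_le_measure_biUnion_mul_sum_inter {ι : Type*} {B : ι → Set X}
    (hB : ∀ i, MeasurableSet (B i)) (s : Finset ι) :
    (∑ i ∈ s, μ (B i)) ^ 2 ≤ μ (⋃ i ∈ s, B i) * ∑ i ∈ s, ∑ j ∈ s, μ (B i ∩ B j) := by
  set f : X → ℝ≥0∞ := ∑ i ∈ s, (B i).indicator 1
  have hf_int : ∫⁻ x, f x ∂μ = ∑ i ∈ s, μ (B i) := by
    simp only [f, Finset.sum_apply]
    rw [lintegral_finsetSum _ fun i _ => measurable_one.indicator (hB i)]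
    simp only [lintegral_indicator_one (hB _)]
  have hf_sq : ∀ x, f x ^ 2 = ∑ i ∈ s, ∑ j ∈ s, (B i ∩ B j).indicator 1 x := fun x => by
    simp only [f, Finset.sum_apply, sq, sum_mul_sum, Set.inter_indicator_one, Pi.mul_apply]
  have hf_sq_int : ∫⁻ x, f x ^ 2 ∂μ = ∑ i ∈ s, ∑ j ∈ s, μ (B i ∩ B j) := by
    simp only [hf_sq]
    rw [lintegral_finsetSum _ fun i _ => Finset.measurable_sum _ fun j _ =>
      measurable_one.indicator ((hB i).inter (hB j))]
    refine sum_congr rfl fun i _ => ?_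
    rw [lintegral_finsetSum _ fun j _ => measurable_one.indicator ((hB i).inter (hB j))]
    simp only [lintegral_indicator_one ((hB _).inter (hB _))]
  have hf_supp : ∀ x ∉ ⋃ i ∈ s, B i, f x = 0 := fun x hx => by
    simp only [f, Finset.sum_apply]
    exact sum_eq_zero fun i hi =>
      Set.indicator_of_notMem (fun hxi => hx (Set.mem_biUnion hi hxi)) _
  rw [← hf_int, ← hf_sq_int]
  exact sq_lintegral_le_measure_mul_lintegral_sq μ
    (Finset.aemeasurable_sum _ fun i _ => aemeasurable_one.indicator (hB i))
    (s.measurableSet_biUnion fun i _ => hB i) hf_supp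

theorem sq_sum_measureReal_le_measureReal_biUnion_mul_sum_inter [IsFiniteMeasure μ]
    {ι : Type*} {B : ι → Set X} (hB : ∀ i, MeasurableSet (B i)) (s : Finset ι) :
    (∑ i ∈ s, μ.real (B i)) ^ 2
      ≤ μ.real (⋃ i ∈ s, B i) * ∑ i ∈ s, ∑ j ∈ s, μ.real (B i ∩ B j) := by
  have h := ENNReal.toReal_mono (ENNReal.mul_ne_top (measure_ne_top _ _)
    (ENNReal.sum_ne_top.2 fun _ _ => ENNReal.sum_ne_top.2 fun _ _ => measure_ne_top _ _))
    (sq_sum_measure_le_measure_biUnion_mul_sum_inter μ hB s)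
  rw [ENNReal.toReal_pow, ENNReal.toReal_mul, ENNReal.toReal_sum fun _ _ =>
    ENNReal.sum_ne_top.2 fun _ _ => measure_ne_top _ _] at h
  simp_rw [ENNReal.toReal_sum fun _ _ => measure_ne_top _ _] at h
  exact h

theorem one_le_mul_measureReal_iUnion_ge_of_sum_inter_le [IsFiniteMeasure μ] {B : ℕ → Set X}
    (hB : ∀ k, MeasurableSet (B k)) (n : ℕ)
    (hdiv : Tendsto (fun N => ∑ k ∈ Icc n N, μ.real (B k)) atTop atTop) {C D D' : ℝ}
    (hbound : ∀ N, n ≤ N →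
      ∑ i ∈ Icc n N, ∑ j ∈ Icc n N, μ.real (B i ∩ B j)
        ≤ C * (D * ∑ k ∈ Icc n N, μ.real (B k) + D' + (∑ k ∈ Icc n N, μ.real (B k)) ^ 2)) :
    1 ≤ C * μ.real (⋃ k, ⋃ (_ : n ≤ k), B k) := by
  refine one_le_of_sq_le_mul_quadratic hdiv (D := D) (D' := D') ?_
  filter_upwards [eventually_ge_atTop n] with N hN
  have hsub : ⋃ i ∈ Icc n N, B i ⊆ ⋃ k, ⋃ (_ : n ≤ k), B k :=
    Set.iUnion₂_mono' fun i hi => ⟨i, (mem_Icc.1 hi).1, subset_rfl⟩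
  calc (∑ k ∈ Icc n N, μ.real (B k)) ^ 2
      ≤ μ.real (⋃ i ∈ Icc n N, B i) * ∑ i ∈ Icc n N, ∑ j ∈ Icc n N, μ.real (B i ∩ B j) :=
        sq_sum_measureReal_le_measureReal_biUnion_mul_sum_inter μ hB _
    _ ≤ μ.real (⋃ k, ⋃ (_ : n ≤ k), B k) * (C * (D * ∑ k ∈ Icc n N, μ.real (B k) + D'
          + (∑ k ∈ Icc n N, μ.real (B k)) ^ 2)) :=
        mul_le_mul (measureReal_mono hsub (measure_ne_top μ _)) (hbound N hN) (by positivity)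
          measureReal_nonneg
    _ = _ := by ring

theorem le_measure_iInter_iUnion_ge_of_forall_le [IsFiniteMeasure μ] {B : ℕ → Set X}
    (hB : ∀ k, MeasurableSet (B k)) {c : ℝ≥0∞} (h : ∀ n, c ≤ μ (⋃ k, ⋃ (_ : n ≤ k), B k)) :
    c ≤ μ (⋂ n, ⋃ k, ⋃ (_ : n ≤ k), B k) := by
  have hanti : Antitone fun n => ⋃ k, ⋃ (_ : n ≤ k), B k := fun m n hmn =>
    Set.iUnion₂_mono' fun k hk => ⟨k, hmn.trans hk, subset_rfl⟩
  rw [hanti.measure_iInter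
    (fun n => .iUnion fun k => .iUnion fun _ => (hB k).nullMeasurableSet) ⟨0, measure_ne_top μ _⟩]
  exact le_iInf h

end

theorem limsup_measure_lower_bound_general
    {X : Type*} [MeasurableSpace X] (μ : Measure X) [IsProbabilityMeasure μ]
    (Ct D D' : ℝ) (hCt : 1 ≤ Ct)
    (B : ℕ → Set X) (hmeas : ∀ k, MeasurableSet (B k))
    (hdiv : ∑' k : ℕ, μ (B k) = ⊤)
    (hbound : ∀ n N : ℕ, n ≤ N →
      ∑ i ∈ Finset.Icc n N, ∑ j ∈ Finset.Icc n N, (μ (B i ∩ B j)).toReal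
        ≤ Ct * (D * ∑ k ∈ Finset.Icc n N, (μ (B k)).toReal + D'
            + (∑ k ∈ Finset.Icc n N, (μ (B k)).toReal) ^ 2)) :
    ENNReal.ofReal (1 / Ct) ≤ μ (⋂ n, ⋃ k, ⋃ (_ : n ≤ k), B k) ∧
      0 < μ (⋂ n, ⋃ k, ⋃ (_ : n ≤ k), B k) := by
  have hCt_pos : 0 < Ct := one_pos.trans_le hCt
  have htail : ∀ n, ENNReal.ofReal (1 / Ct) ≤ μ (⋃ k, ⋃ (_ : n ≤ k), B k) := fun n => by
    have h := one_le_mul_measureReal_iUnion_ge_of_sum_inter_le μ hmeas n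
      (tendsto_sum_Icc_toReal_atTop (fun k => measure_ne_top μ _) hdiv n) (hbound n)
    rw [ENNReal.ofReal_le_iff_le_toReal (measure_ne_top _ _), div_le_iff₀' hCt_pos]
    exact h
  have hlimsup := le_measure_iInter_iUnion_ge_of_forall_le μ hmeas htail
  exact ⟨hlimsup, (ENNReal.ofReal_pos.2 (by positivity)).trans_le hlimsup⟩

theorem limsup_measure_lower_bound
    {X : Type*} [MeasurableSpace X] (μ : Measure X) [IsProbabilityMeasure μ]
    (δ : ℝ) (hδ0 : 0 < δ) (hδ1 : δ < 1)
    (Ct D D' : ℝ) (hCt : 1 ≤ Ct) (hD : 0 < D) (hD' : 0 < D')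
    (B : ℕ → Set X) (hmeas : ∀ k, MeasurableSet (B k))
    (hdiv : ∑' k : ℕ, μ (B k) = ⊤)
    (hbound : ∀ n N : ℕ, n ≤ N →
      ∑ i ∈ Finset.Icc n N, ∑ j ∈ Finset.Icc n N, (μ (B i ∩ B j)).toReal
        ≤ Ct * (D * ∑ k ∈ Finset.Icc n N, (μ (B k)).toReal + D'
            + (∑ k ∈ Finset.Icc n N, (μ (B k)).toReal) ^ 2)) :
    ENNReal.ofReal (1 / Ct) ≤ μ (⋂ n, ⋃ k, ⋃ (_ : n ≤ k), B k) ∧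
      0 < μ (⋂ n, ⋃ k, ⋃ (_ : n ≤ k), B k) :=
  limsup_measure_lower_bound_general μ Ct D D' hCt B hmeas hdiv hbound
end
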